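/- arXiv:1902.07369 — 2 statements merged into one kernel-verified Lean document; each statement's English description precedes it below -/
import Mathlib

section
/- For all n \ge 0, ((1/3)_n (2/3)_n / ((2)_n n!)) * 27^n = C(2n,n) C(3n,n) / (n+1), where (a)_n denotes the Pochhammer symbol. -/
lemma poch_two_eval (n : ℕ) : (ascPochhammer ℚ n).eval (2 : ℚ) = ((n+1).factorial : ℚ) := by
  induction n with
  | zero => simp
  | succ k ih =>
    rw [ascPochhammer_succ_eval, ih]
    push_cast [Nat.factorial_succ]
    ring

lemma poch_thirds (n : ℕ) :
    (ascPochhammer ℚ n).eval (1/3 : ℚ) * (ascPochhammer ℚ n).eval (2/3 : ℚ) * 27 ^ n *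
      (n.factorial : ℚ) = ((3*n).factorial : ℚ) := by
  induction n with
  | zero => simp
  | succ k ih =>
    rw [ascPochhammer_succ_eval, ascPochhammer_succ_eval, Nat.factorial_succ]
    have h3 : 3 * (k+1) = (3*k+2) + 1 := by ring
    rw [h3, Nat.factorial_succ, show 3*k+2 = (3*k+1)+1 from rfl, Nat.factorial_succ,
      show 3*k+1 = (3*k)+1 from rfl, Nat.factorial_succ]
    push_cast
    linear_combination ((k:ℚ)+1/3) * ((k:ℚ)+2/3) * 27 * ((k:ℚ)+1) * ih

/-- For all `n ≥ 0`, `((1/3)_n (2/3)_n / ((2)_n n!)) * 27^n = C(2n,n) C(3n,n) / (n+1)`,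
where `(a)_n` is the Pochhammer symbol. -/
theorem pochhammer_third_eq_binomials (n : ℕ) :
    (ascPochhammer ℚ n).eval (1/3 : ℚ) * (ascPochhammer ℚ n).eval (2/3 : ℚ) /
        ((ascPochhammer ℚ n).eval (2 : ℚ) * (n.factorial : ℚ)) * 27 ^ n =
      ((2 * n).choose n : ℚ) * ((3 * n).choose n : ℚ) / ((n : ℚ) + 1) := by
  have hc1 : ((2*n).choose n : ℚ) = ((2*n).factorial : ℚ) / ((n.factorial : ℚ) * (n.factorial : ℚ)) := by
    rw [Nat.cast_choose ℚ (show n ≤ 2*n by omega), show 2*n - n = n by omega]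
  have hc2 : ((3*n).choose n : ℚ) = ((3*n).factorial : ℚ) / ((n.factorial : ℚ) * ((2*n).factorial : ℚ)) := by
    rw [Nat.cast_choose ℚ (show n ≤ 3*n by omega), show 3*n - n = 2*n by omega]
  have hf : (n.factorial : ℚ) ≠ 0 := Nat.cast_ne_zero.2 n.factorial_ne_zero
  have hf2 : ((2*n).factorial : ℚ) ≠ 0 := Nat.cast_ne_zero.2 (2*n).factorial_ne_zero
  have hn1 : ((n : ℚ) + 1) ≠ 0 := by positivity
  rw [hc1, hc2, poch_two_eval, Nat.factorial_succ]
  push_cast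
  field_simp
  linear_combination poch_thirds n
end

section
/- For formal power series: if P(t,y), C(t,x,y), D(t,x,y) belong to \mathbb{Q}[[y,t]], \mathbb{Q}[x][[y,t]], \mathbb{Q}[[x,y,t]] respectively and satisfy P(t,y) = (1/y)[x^1]C(t,x,y), D(t,x,y) = 1/(1 - C(t, 1/(1-x), y)), C(t,x,y) = x y [x^{\ge 0}](P(t,tx) D(t, 1/x, y)), with initial condition P(t,0) = 1, then the triple (P, C, D) is unique. -/
open PowerSeries Finset

noncomputable section

/-- Substitution of `x ↦ 1/(1-x)` into a polynomial in `x`, landing in `ℚ[[x]]`. -/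
def substGeom (p : Polynomial ℚ) : PowerSeries ℚ :=
  Polynomial.aeval ((1 - PowerSeries.X : PowerSeries ℚ)⁻¹) p

/-- `P(t,y) ∈ ℚ[[y,t]]` is given by its coefficients `P j k` of `y^j t^k`;
`C(t,x,y) ∈ ℚ[x][[y,t]]` by its coefficients `C j k ∈ ℚ[x]` of `y^j t^k`;
`D(t,x,y) ∈ ℚ[[x,y,t]]` by its coefficients `D j k ∈ ℚ[[x]]` of `y^j t^k`.

Equation `P(t,y) = (1/y)[x¹]C(t,x,y)`, coefficient-wise. -/
def EqnP (P : ℕ → ℕ → ℚ) (C : ℕ → ℕ → Polynomial ℚ) : Prop :=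
  ∀ j k : ℕ, P j k = (C (j + 1) k).coeff 1

/-- Equation `D(t,x,y) = 1/(1 - C(t, 1/(1-x), y))`, written as
`(1 - C(t, 1/(1-x), y)) · D(t,x,y) = 1` coefficient-wise in `(y,t)` (convolution
product), each coefficient being a power series in `x`. -/
def EqnD (C : ℕ → ℕ → Polynomial ℚ) (D : ℕ → ℕ → PowerSeries ℚ) : Prop :=
  ∀ j k : ℕ,
    ∑ p ∈ Finset.HasAntidiagonal.antidiagonal j, ∑ q ∈ Finset.HasAntidiagonal.antidiagonal k,
      ((if p.1 = 0 ∧ q.1 = 0 then (1 : PowerSeries ℚ) else 0) - substGeom (C p.1 q.1))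
          * D p.2 q.2
      = (if j = 0 ∧ k = 0 then 1 else 0)

/-- Equation `C(t,x,y) = x y [x^{≥0}](P(t,tx) D(t,1/x,y))`, coefficient-wise:
the coefficient of `y^0` in `C` vanishes, the coefficient of `x^0` in each
`y^{j+1} t^k`-coefficient of `C` vanishes, and for `r ≥ 0` the coefficient of
`x^{r+1} y^{j+1} t^k` in `C` equals the coefficient of `x^r` in the non-negative part
of `[y^j t^k](P(t,tx) D(t,1/x,y))`, namely
`∑_{k₁+k₂=k} ∑_{a+b=k₁, a ≥ r} P a b · [x^{a-r}] D j k₂`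
(using `[t^{k₁}]P(t,tx) = ∑_{a+b=k₁} P a b · x^a`). -/
def EqnC (P : ℕ → ℕ → ℚ) (C : ℕ → ℕ → Polynomial ℚ) (D : ℕ → ℕ → PowerSeries ℚ) : Prop :=
  (∀ k : ℕ, C 0 k = 0) ∧
  (∀ j k : ℕ, (C (j + 1) k).coeff 0 = 0) ∧
  (∀ j k r : ℕ, (C (j + 1) k).coeff (r + 1) =
    ∑ q ∈ Finset.HasAntidiagonal.antidiagonal k, ∑ p ∈ Finset.HasAntidiagonal.antidiagonal q.1,
      if r ≤ p.1 then P p.1 p.2 * PowerSeries.coeff (p.1 - r) (D j q.2) else 0)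

/-- Initial condition `P(t,0) = 1`. -/
def InitP (P : ℕ → ℕ → ℚ) : Prop := ∀ k : ℕ, P 0 k = if k = 0 then 1 else 0

lemma substGeom_zero : substGeom 0 = 0 := map_zero _

/-- The system of equations of Proposition `thm:systemG` has at most one solution
`(P, C, D)`. -/
theorem PCD_system_unique
    (P P' : ℕ → ℕ → ℚ) (C C' : ℕ → ℕ → Polynomial ℚ) (D D' : ℕ → ℕ → PowerSeries ℚ)
    (hP : EqnP P C) (hD : EqnD C D) (hC : EqnC P C D) (h0 : InitP P)
    (hP' : EqnP P' C') (hD' : EqnD C' D') (hC' : EqnC P' C' D') (h0' : InitP P') :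
    P = P' ∧ C = C' ∧ D = D' := by
  have key : ∀ n : ℕ, ∀ j k : ℕ, j + k = n →
      P j k = P' j k ∧ C j k = C' j k ∧ D j k = D' j k := by
    intro n
    induction n using Nat.strong_induction_on with
    | _ n ih =>
    have hPlt : ∀ j k, j + k < n → P j k = P' j k := fun j k h => (ih _ h j k rfl).1
    have hClt : ∀ j k, j + k < n → C j k = C' j k := fun j k h => (ih _ h j k rfl).2.1
    have hDlt : ∀ j k, j + k < n → D j k = D' j k := fun j k h => (ih _ h j k rfl).2.2
    -- C at degree n
    have hCeq : ∀ j k, j + k = n → C j k = C' j k := by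
      intro j k hjk
      cases j with
      | zero => rw [hC.1, hC'.1]
      | succ j =>
        ext m
        cases m with
        | zero => rw [hC.2.1, hC'.2.1]
        | succ r =>
          rw [hC.2.2, hC'.2.2]
          refine Finset.sum_congr rfl fun q hq => Finset.sum_congr rfl fun p hp => ?_
          rw [Finset.HasAntidiagonal.mem_antidiagonal] at hq hp
          split
          · rw [hPlt p.1 p.2 (by omega), hDlt j q.2 (by omega)]
          · rfl
    have hCle : ∀ j k, j + k ≤ n → C j k = C' j k := by
      intro j k h
      rcases eq_or_lt_of_le h with h | h
      · exact hCeq j k h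
      · exact hClt j k h
    -- D at degree n
    have hDeq : ∀ j k, j + k = n → D j k = D' j k := by
      intro j k hjk
      have hsub : ∑ p ∈ Finset.HasAntidiagonal.antidiagonal j, ∑ q ∈ Finset.HasAntidiagonal.antidiagonal k,
          (((if p.1 = 0 ∧ q.1 = 0 then (1 : PowerSeries ℚ) else 0) - substGeom (C p.1 q.1))
            * D p.2 q.2
          - ((if p.1 = 0 ∧ q.1 = 0 then (1 : PowerSeries ℚ) else 0) - substGeom (C' p.1 q.1))
            * D' p.2 q.2) = 0 := by
        simp only [Finset.sum_sub_distrib]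
        rw [hD j k, hD' j k, sub_self]
      rw [Finset.sum_eq_single_of_mem ((0 : ℕ), j) (by simp) ?_] at hsub
      · rw [Finset.sum_eq_single_of_mem ((0 : ℕ), k) (by simp) ?_] at hsub
        · simp only [hC.1, hC'.1, substGeom_zero, and_self, if_true, sub_zero, one_mul] at hsub
          exact sub_eq_zero.mp hsub
        · intro q hq hne
          rw [Finset.HasAntidiagonal.mem_antidiagonal] at hq
          have hq1 : q.1 ≠ 0 := by
            intro h
            exact hne (Prod.ext h (by omega))
          rw [if_neg (by simp [hq1]), hC.1, hC'.1, substGeom_zero]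
          simp
      · intro p hp hne
        rw [Finset.HasAntidiagonal.mem_antidiagonal] at hp
        have hp1 : p.1 ≠ 0 := by
          intro h
          exact hne (Prod.ext h (by omega))
        refine Finset.sum_eq_zero fun q hq => ?_
        rw [Finset.HasAntidiagonal.mem_antidiagonal] at hq
        rw [hCle p.1 q.1 (by omega), hDlt p.2 q.2 (by omega), sub_self]
    have hDle : ∀ j k, j + k ≤ n → D j k = D' j k := by
      intro j k h
      rcases eq_or_lt_of_le h with h | h
      · exact hDeq j k h
      · exact hDlt j k h
    -- P at degree n
    have hPeq : ∀ j k, j + k = n → P j k = P' j k := by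
      intro j k hjk
      cases j with
      | zero => rw [h0, h0']
      | succ j =>
        rw [hP (j + 1) k, hP' (j + 1) k, show (1 : ℕ) = 0 + 1 from rfl, hC.2.2, hC'.2.2]
        refine Finset.sum_congr rfl fun q hq => Finset.sum_congr rfl fun p hp => ?_
        rw [Finset.HasAntidiagonal.mem_antidiagonal] at hq hp
        split
        · rw [hPlt p.1 p.2 (by omega), hDle (j + 1) q.2 (by omega)]
        · rfl
    exact fun j k h => ⟨hPeq j k h, hCeq j k h, hDeq j k h⟩
  exact ⟨funext fun j => funext fun k => (key (j + k) j k rfl).1,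
         funext fun j => funext fun k => (key (j + k) j k rfl).2.1,
         funext fun j => funext fun k => (key (j + k) j k rfl).2.2⟩

end
end
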